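/- arXiv:1006.2616 — 5 statements merged into one kernel-verified Lean document; each statement's English description precedes it below -/
import Mathlib

section
/- An open graph (G, I, O) has a gflow if and only if it has a focused gflow. -/
open scoped Classical
noncomputable section

variable {V : Type*} [Fintype V] [DecidableEq V]

/-- Odd neighborhood: vertices with an odd number of neighbors in `S`. -/
def oddNbhd (G : SimpleGraph V) (S : Finset V) : Finset V :=
  Finset.univ.filter fun v => Odd (S.filter (G.Adj v)).card

/-- `(g, r)` is a gflow of the open graph `(G, I, O)`. -/
def IsGflow (G : SimpleGraph V) (I O : Finset V)
    (g : V → Finset V) (r : V → V → Prop) : Prop :=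
  IsStrictOrder V r ∧
  ∀ u ∉ O,
    g u ⊆ Iᶜ ∧
    (∀ v ∈ g u, r u v) ∧
    u ∈ oddNbhd G (g u) ∧
    (∀ v ∈ oddNbhd G (g u), v ≠ u → r u v)

def HasGflow (G : SimpleGraph V) (I O : Finset V) : Prop :=
  ∃ g r, IsGflow G I O g r

/-- `g` is a focused gflow of the open graph `(G, I, O)`. -/
def IsFocusedGflow (G : SimpleGraph V) (I O : Finset V) (g : V → Finset V) : Prop :=
  (∀ u, ¬ Relation.TransGen (fun a b => a ∉ O ∧ b ∈ g a) u u) ∧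
  ∀ u ∉ O, g u ⊆ Iᶜ ∧ oddNbhd G (g u) ∩ Oᶜ = {u}

/-! Odd neighbourhoods are additive for symmetric difference, so correction sets of a vertex `u`
(non-inputs after `u`) may be combined freely. Given a gflow, the odd neighbourhood of `g u`
meets the non-outputs in `u` and in vertices `v` after `u`; by well-founded induction from the top
of the order each such `v` already has a focused correction set, and adding all of them to `g u`
cancels the extra vertices. Conversely, a focused gflow is a gflow for the transitive closure of
`v ∈ g u`, extended by placing every output after every non-output. -/

open Finset
open scoped symmDiff

theorem Finset.odd_card_symmDiff_iff {α : Type*} [DecidableEq α] (s t : Finset α) :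
    Odd #(s ∆ t) ↔ ¬(Odd #s ↔ Odd #t) := by
  have hunion := card_union_add_card_inter s t
  have hsymm : #(s ∆ t) = #(s ∪ t) - #(s ∩ t) := by
    rw [symmDiff_eq_sup_sdiff_inf, sup_eq_union, inf_eq_inter,
      card_sdiff_of_subset inter_subset_union]
  have hle : #(s ∩ t) ≤ #(s ∪ t) := card_le_card inter_subset_union
  simp only [Nat.odd_iff]
  omega

theorem oddNbhd_symmDiff (G : SimpleGraph V) (S T : Finset V) :
    oddNbhd G (S ∆ T) = oddNbhd G S ∆ oddNbhd G T := by
  ext v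
  have hfilter : (S ∆ T).filter (G.Adj v) = S.filter (G.Adj v) ∆ T.filter (G.Adj v) := by
    ext w
    simp only [mem_filter, mem_symmDiff]
    tauto
  simp only [oddNbhd, mem_filter, mem_univ, true_and, mem_symmDiff, hfilter,
    odd_card_symmDiff_iff]
  tauto

section Focusing

variable (G : SimpleGraph V) (I O : Finset V) (r : V → V → Prop)

def IsCorrectionSet (u : V) (S B : Finset V) : Prop :=
  S ⊆ Iᶜ ∧ (∀ v ∈ S, r u v) ∧ oddNbhd G S ∩ Oᶜ = B

variable {G I O r}

theorem isCorrectionSet_empty (u : V) : IsCorrectionSet G I O r u ∅ ∅ := by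
  simp [IsCorrectionSet, oddNbhd]

theorem IsCorrectionSet.symmDiff {u : V} {S T B C : Finset V}
    (hS : IsCorrectionSet G I O r u S B) (hT : IsCorrectionSet G I O r u T C) :
    IsCorrectionSet G I O r u (S ∆ T) (B ∆ C) := by
  obtain ⟨hSI, hSr, hSB⟩ := hS
  obtain ⟨hTI, hTr, hTC⟩ := hT
  refine ⟨symmDiff_subset_union.trans (union_subset hSI hTI), fun v hv => ?_, ?_⟩
  · rcases mem_union.1 (symmDiff_subset_union hv) with hv | hv
    exacts [hSr v hv, hTr v hv]
  · rw [oddNbhd_symmDiff, ← inf_eq_inter, inf_symmDiff_distrib_right]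
    exact congrArg₂ _ hSB hTC

theorem IsCorrectionSet.of_rel [IsTrans V r] {u v : V} {S B : Finset V} (huv : r u v)
    (hS : IsCorrectionSet G I O r v S B) : IsCorrectionSet G I O r u S B :=
  ⟨hS.1, fun w hw => _root_.trans huv (hS.2.1 w hw), hS.2.2⟩

theorem exists_isCorrectionSet_of_forall_singleton {u : V} {B : Finset V}
    (h : ∀ v ∈ B, ∃ S, IsCorrectionSet G I O r u S {v}) :
    ∃ S, IsCorrectionSet G I O r u S B := by
  induction B using Finset.induction_on with
  | empty => exact ⟨∅, isCorrectionSet_empty u⟩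
  | insert v B hvB ih =>
    obtain ⟨S, hS⟩ := ih fun w hw => h w (mem_insert_of_mem hw)
    obtain ⟨T, hT⟩ := h v (mem_insert_self v B)
    refine ⟨T ∆ S, ?_⟩
    have hins : {v} ∆ B = insert v B := by
      rw [(disjoint_singleton_left.2 hvB).symmDiff_eq_sup, sup_eq_union, insert_eq]
    simpa only [hins] using hT.symmDiff hS

theorem IsGflow.exists_isCorrectionSet {g : V → Finset V} (hg : IsGflow G I O g r) :
    ∀ u ∉ O, ∃ S, IsCorrectionSet G I O r u S {u} := by
  have := hg.1
  intro u
  induction u using (Finite.wellFounded_of_trans_of_irrefl (Function.swap r)).induction with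
  | _ u ih =>
  intro hu
  obtain ⟨hgI, hgr, hodd, hoddr⟩ := hg.2 u hu
  set A := oddNbhd G (g u) ∩ Oᶜ
  have hA : IsCorrectionSet G I O r u (g u) A := ⟨hgI, hgr, rfl⟩
  obtain ⟨T, hT⟩ : ∃ T, IsCorrectionSet G I O r u T (A.erase u) := by
    refine exists_isCorrectionSet_of_forall_singleton fun v hv => ?_
    obtain ⟨hvu, hvA⟩ := mem_erase.1 hv
    have huv : r u v := hoddr v (mem_inter.1 hvA).1 hvu
    obtain ⟨S, hS⟩ := ih v huv (mem_compl.1 (mem_inter.1 hvA).2)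
    exact ⟨S, hS.of_rel huv⟩
  have huA : u ∈ A := mem_inter.2 ⟨hodd, mem_compl.2 hu⟩
  refine ⟨g u ∆ T, ?_⟩
  convert hA.symmDiff hT using 1
  ext v
  by_cases hv : v = u <;> simp [hv, huA, mem_symmDiff]

theorem IsGflow.exists_isFocusedGflow {g : V → Finset V} (hg : IsGflow G I O g r) :
    ∃ f, IsFocusedGflow G I O f := by
  have := hg.1
  choose! f hf using hg.exists_isCorrectionSet
  refine ⟨f, fun u hcycle => irrefl (r := r) u ?_, fun u hu => ⟨(hf u hu).1, (hf u hu).2.2⟩⟩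
  rw [← Relation.transGen_eq_self (r := r)]
  exact Relation.TransGen.mono (fun a b hab => (hf a hab.1).2.1 b hab.2) u u hcycle

end Focusing

theorem IsStrictOrder.or_not_and {α : Type*} {r : α → α → Prop} [IsStrictOrder α r]
    {p : α → Prop} (h : ∀ a b, r a b → ¬p a) :
    IsStrictOrder α fun a b => r a b ∨ ¬p a ∧ p b where
  irrefl a := by
    rintro (haa | ⟨hna, ha⟩)
    exacts [irrefl a haa, hna ha]
  trans a b c := by
    rintro (hab | ⟨-, hb⟩) (hbc | ⟨hnb, hc⟩)
    · exact .inl (_root_.trans hab hbc)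
    · exact .inr ⟨h a b hab, hc⟩
    · exact absurd hb (h b c hbc)
    · exact absurd hb hnb

theorem IsFocusedGflow.isGflow {G : SimpleGraph V} {I O : Finset V} {g : V → Finset V}
    (hg : IsFocusedGflow G I O g) :
    IsGflow G I O g fun a b =>
      Relation.TransGen (fun a b => a ∉ O ∧ b ∈ g a) a b ∨ a ∉ O ∧ b ∈ O := by
  obtain ⟨hacyclic, hfocused⟩ := hg
  have : IsStrictOrder V (Relation.TransGen fun a b => a ∉ O ∧ b ∈ g a) :=
    { irrefl := hacyclic, trans := fun _ _ _ => .trans }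
  refine ⟨IsStrictOrder.or_not_and fun a b hab => ?_, fun u hu => ?_⟩
  · obtain ⟨c, hac, -⟩ := Relation.TransGen.head'_iff.1 hab
    exact hac.1
  obtain ⟨hI, hodd⟩ := hfocused u hu
  have hmem (v : V) : v ∈ oddNbhd G (g u) ∧ v ∉ O ↔ v = u := by
    rw [← mem_singleton, ← hodd, mem_inter, mem_compl]
  refine ⟨hI, fun v hv => .inl (.single ⟨hu, hv⟩), ((hmem u).2 rfl).1,
    fun v hv hvu => .inr ⟨hu, ?_⟩⟩
  by_contra hvO
  exact hvu ((hmem v).1 ⟨hv, hvO⟩)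

theorem hasGflow_iff_hasFocusedGflow (G : SimpleGraph V) (I O : Finset V) :
    HasGflow G I O ↔ ∃ g, IsFocusedGflow G I O g :=
  ⟨fun ⟨_, _, hg⟩ => hg.exists_isFocusedGflow, fun ⟨g, hg⟩ => ⟨g, _, hg.isGflow⟩⟩
end
end

section
/- An open graph (G, I, O) has a focused gflow if and only if there exists a directed acyclic graph F on the vertex set V(G) such that the product of induced adjacency matrices over F₂ satisfies A_G|_{Iᶜ}^{Oᶜ} · A_F|_{Oᶜ}^{Iᶜ} = Identity, where A_G|_{Iᶜ}^{Oᶜ} is the submatrix of the adjacency matrix of G with rows indexed by Oᶜ and columns by Iᶜ, and A_F|_{Oᶜ}^{Iᶜ} is the submatrix of the adjacency matrix of F with rows indexed by Iᶜ and columns by Oᶜ. -/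
open scoped Classical
noncomputable section

variable {V : Type*} [Fintype V] [DecidableEq V]

/-!
Read the correction set of `w` off column `w` of `A_F`: `g w = {v ∉ I | F v w}`. Entry `(u, w)` of
`A_G|_{Iᶜ}^{Oᶜ} · A_F|_{Oᶜ}^{Iᶜ}` is then the parity of `|N_G(u) ∩ g w|`, i.e. it is `1` exactly when
`u ∈ Odd_G(g w)`. So the product is the identity iff `Odd_G(g w) ∩ Oᶜ = {w}` for every `w ∉ O`, and
the relation `v ∈ g w` of the gflow is the reverse of the edge relation of `F`, so one is acyclic iff
the other is.
-/

theorem Relation.not_transGen_self_of_le_swap {α : Type*} {r s : α → α → Prop}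
    (hrs : ∀ a b, r a b → s b a) (hs : ∀ a, ¬ Relation.TransGen s a a) (a : α) :
    ¬ Relation.TransGen r a a := fun h =>
  hs a (Relation.transGen_swap.mp (Relation.TransGen.mono (p := Function.swap s) hrs a a h))

theorem ZMod.natCast_eq_ite_iff_odd (n : ℕ) (p : Prop) [Decidable p] :
    (n : ZMod 2) = (if p then 1 else 0) ↔ (Odd n ↔ p) := by
  by_cases hp : p <;>
    simp [hp, ZMod.natCast_eq_one_iff_odd, ZMod.natCast_eq_zero_iff_even]

theorem Finset.inter_compl_eq_singleton_iff {α : Type*} [Fintype α] [DecidableEq α]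
    {s t : Finset α} {a : α} (ha : a ∉ t) :
    s ∩ tᶜ = {a} ↔ ∀ x ∉ t, (x ∈ s ↔ x = a) := by
  constructor
  · intro h x hx
    simpa [hx] using Finset.ext_iff.mp h x
  · intro h
    ext x
    by_cases hx : x ∈ t
    · simp [hx, ne_of_mem_of_not_mem hx ha]
    · simp [hx, h x hx]

theorem mem_oddNbhd {α : Type*} [Fintype α] {G : SimpleGraph α} {S : Finset α} {v : α} :
    v ∈ oddNbhd G S ↔ Odd (S.filter (G.Adj v)).card := by
  simp [oddNbhd]

theorem sum_adj_mul_mem_eq_card (G : SimpleGraph V) (I S : Finset V) (hS : S ⊆ Iᶜ)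
    (u : V) :
    ∑ v : {v // v ∉ I}, (if G.Adj u v.1 then (1 : ZMod 2) else 0) *
        (if v.1 ∈ S then 1 else 0) = ((S.filter (G.Adj u)).card : ZMod 2) := by
  rw [← Finset.sum_subtype Iᶜ (fun _ => Finset.mem_compl)
    (fun v => (if G.Adj u v then (1 : ZMod 2) else 0) * if v ∈ S then 1 else 0)]
  simp only [ite_zero_mul_ite_zero, mul_one, Finset.sum_boole]
  congr 2
  ext v
  have : v ∈ S → v ∉ I := fun hv => Finset.mem_compl.mp (hS hv)
  simp only [Finset.mem_filter, Finset.mem_compl]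
  tauto

def colSupport (I : Finset V) (F : V → V → Bool) (w : V) : Finset V :=
  Finset.univ.filter fun v => v ∉ I ∧ F v w

theorem mem_colSupport {I : Finset V} {F : V → V → Bool} {v w : V} :
    v ∈ colSupport I F w ↔ v ∉ I ∧ F v w = true := by
  simp [colSupport]

theorem colSupport_subset_compl (I : Finset V) (F : V → V → Bool) (w : V) :
    colSupport I F w ⊆ Iᶜ :=
  fun _ hv => Finset.mem_compl.mpr (mem_colSupport.mp hv).1

theorem adj_mul_eq_one_iff (G : SimpleGraph V) (I O : Finset V) (F : V → V → Bool) :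
    (Matrix.of fun (u : {v // v ∉ O}) (w : {v // v ∉ I}) =>
        if G.Adj u.1 w.1 then (1 : ZMod 2) else 0) *
      (Matrix.of fun (u : {v // v ∉ I}) (w : {v // v ∉ O}) =>
        if F u.1 w.1 then (1 : ZMod 2) else 0) = 1 ↔
      ∀ w ∉ O, oddNbhd G (colSupport I F w) ∩ Oᶜ = {w} := by
  have hcol : ∀ (v : {v // v ∉ I}) w, F v.1 w = true ↔ v.1 ∈ colSupport I F w :=
    fun v w => by simp [mem_colSupport, v.2]
  rw [← Matrix.ext_iff]
  simp only [Matrix.mul_apply, Matrix.of_apply, Matrix.one_apply, hcol,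
    sum_adj_mul_mem_eq_card G I _ (colSupport_subset_compl I F _), ZMod.natCast_eq_ite_iff_odd,
    Subtype.ext_iff, ← mem_oddNbhd, Subtype.forall]
  exact ⟨fun h w hw => (Finset.inter_compl_eq_singleton_iff hw).2 fun u hu => h u hu w hw,
    fun h u hu w hw => (Finset.inter_compl_eq_singleton_iff hw).1 (h w hw) u hu⟩

def flowDag (O : Finset V) (g : V → Finset V) (v w : V) : Bool :=
  decide (w ∉ O ∧ v ∈ g w)

theorem colSupport_flowDag {I O : Finset V} {g : V → Finset V} {w : V} (hgw : g w ⊆ Iᶜ)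
    (hw : w ∉ O) : colSupport I (flowDag O g) w = g w := by
  ext v
  have : v ∈ g w → v ∉ I := fun hv => Finset.mem_compl.mp (hgw hv)
  simp only [mem_colSupport, flowDag, hw, not_false_eq_true, true_and, decide_eq_true_eq]
  tauto

theorem focusedGflow_iff_dag_right_inverse (G : SimpleGraph V) (I O : Finset V) :
    (∃ g, IsFocusedGflow G I O g) ↔
      ∃ F : V → V → Bool,
        (∀ u, ¬ Relation.TransGen (fun a b => F a b = true) u u) ∧
        (Matrix.of fun (u : {v // v ∉ O}) (w : {v // v ∉ I}) =>
            if G.Adj u.1 w.1 then (1 : ZMod 2) else 0) *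
          (Matrix.of fun (u : {v // v ∉ I}) (w : {v // v ∉ O}) =>
            if F u.1 w.1 then (1 : ZMod 2) else 0) = 1 := by
  constructor
  · rintro ⟨g, hacyclic, hg⟩
    refine ⟨flowDag O g, ?_, (adj_mul_eq_one_iff G I O _).2 fun w hw => ?_⟩
    · exact Relation.not_transGen_self_of_le_swap (fun a b h => of_decide_eq_true h) hacyclic
    · rw [colSupport_flowDag (hg w hw).1 hw]
      exact (hg w hw).2
  · rintro ⟨F, hacyclic, hF⟩
    refine ⟨colSupport I F, ?_, fun w hw => ⟨?_, (adj_mul_eq_one_iff G I O F).1 hF w hw⟩⟩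
    · exact Relation.not_transGen_self_of_le_swap (fun a b h => (mem_colSupport.mp h.2).2)
        hacyclic
    · exact colSupport_subset_compl I F w
end
end

section
/- If an open graph (G, I, O) has a gflow, then |I| ≤ |O|. -/
open scoped Classical
noncomputable section

variable {V : Type*} [Fintype V] [DecidableEq V]

/-! The characteristic vectors of the correction sets `g u`, `u ∉ O`, are linearly independent
over `𝔽₂` and supported on `Iᶜ`, so `|Oᶜ| ≤ |Iᶜ|`. Independence comes from multiplying by the
adjacency matrix: this turns `𝟙_{g u}` into `𝟙_{Odd (g u)}`, and the gflow conditions say that this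
system is triangular with nonzero diagonal with respect to the gflow order, so the `≺`-minimal
vertex in the support of a vanishing combination has coefficient zero. -/

theorem linearIndependent_of_wellFounded_triangular {ι R M : Type*} [Ring R] [NoZeroDivisors R]
    [AddCommGroup M] [Module R M] {r : ι → ι → Prop} (hr : WellFounded r)
    (x : ι → M) (φ : ι → M →ₗ[R] R) (hdiag : ∀ i, φ i (x i) ≠ 0)
    (htri : ∀ i j, φ j (x i) ≠ 0 → i ≠ j → r i j) :
    LinearIndependent R x := by
  rw [linearIndependent_iff']
  intro s c hsum
  by_contra! hne
  obtain ⟨j, ⟨hjs, hcj⟩, hmin⟩ := hr.has_min {i | i ∈ s ∧ c i ≠ 0} hne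
  have hφ : φ j (∑ i ∈ s, c i • x i) = c j * φ j (x j) := by
    simp only [map_sum, map_smul, smul_eq_mul]
    refine Finset.sum_eq_single_of_mem j hjs fun i his hij => ?_
    by_contra h
    obtain ⟨hci, hφi⟩ := mul_ne_zero_iff.mp h
    exact hmin i ⟨his, hci⟩ (htri i j hφi hij)
  rw [hsum, map_zero] at hφ
  exact mul_ne_zero hcj (hdiag j) hφ.symm

theorem sum_adj_mul_indicator_ne_zero_iff (G : SimpleGraph V) {I S : Finset V}
    (hS : S ⊆ Iᶜ) (u : V) :
    ∑ v : (Iᶜ : Finset V),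
        (if G.Adj u v then (1 : ZMod 2) else 0) * (if (v : V) ∈ S then 1 else 0) ≠ 0
      ↔ u ∈ oddNbhd G S := by
  rw [Finset.sum_coe_sort Iᶜ fun v => (if G.Adj u v then 1 else 0) * (if v ∈ S then 1 else 0),
    ← Finset.sum_subset hS]
  · rw [oddNbhd, Finset.mem_filter, ← ZMod.natCast_ne_zero_iff_odd, Finset.natCast_card_filter]
    simp
  · intro v _ hv
    simp [hv]

theorem IsGflow.linearIndependent {G : SimpleGraph V} {I O : Finset V} {g : V → Finset V}
    {r : V → V → Prop} (hg : IsGflow G I O g r) :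
    LinearIndependent (ZMod 2) fun (u : (Oᶜ : Finset V)) (v : (Iᶜ : Finset V)) =>
      if (v : V) ∈ g u then (1 : ZMod 2) else 0 := by
  obtain ⟨hr, hcond⟩ := hg
  have hu : ∀ u : (Oᶜ : Finset V), (u : V) ∉ O := fun u => Finset.mem_compl.mp u.2
  let B : Matrix (Oᶜ : Finset V) (Iᶜ : Finset V) (ZMod 2) :=
    (G.adjMatrix (ZMod 2)).submatrix Subtype.val Subtype.val
  have hB : ∀ u u' : (Oᶜ : Finset V),
      (B.mulVec fun v : (Iᶜ : Finset V) => if (v : V) ∈ g u' then 1 else 0) u ≠ 0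
        ↔ (u : V) ∈ oddNbhd G (g u') := by
    intro u u'
    simp only [Matrix.mulVec, dotProduct, B, Matrix.submatrix_apply, SimpleGraph.adjMatrix_apply]
    exact sum_adj_mul_indicator_ne_zero_iff G (hcond u' (hu u')).1 u
  have := hr.toIsTrans
  have := hr.toIrrefl
  refine linearIndependent_of_wellFounded_triangular
    (InvImage.wf Subtype.val (Finite.wellFounded_of_trans_of_irrefl r)) _
    (fun u => (LinearMap.proj u).comp B.mulVecLin) (fun u => ?_) (fun u u' h hne => ?_)
  · exact (hB u u).mpr (hcond u (hu u)).2.2.1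
  · exact (hcond u (hu u)).2.2.2 u' ((hB u' u).mp h) (Subtype.coe_ne_coe.mpr hne.symm)

theorem card_inputs_le_card_outputs_of_hasGflow (G : SimpleGraph V) (I O : Finset V)
    (h : HasGflow G I O) : I.card ≤ O.card := by
  obtain ⟨g, r, hg⟩ := h
  have hcard := hg.linearIndependent.fintype_card_le_finrank
  rw [Module.finrank_fintype_fun_eq_card, Fintype.card_coe, Fintype.card_coe,
    Finset.card_compl, Finset.card_compl] at hcard
  have := Finset.card_le_univ I
  have := Finset.card_le_univ O
  omega
end
end

section
/- Let (G, I, O) be an open graph with |I| = |O|. If (G, I, O) has no nonempty internal set (i.e., every nonempty W ⊆ Oᶜ has Odd(W) ⊄ W ∪ I), then (G, I, O) has a gflow. -/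
open scoped Classical
noncomputable section

variable {V : Type*} [Fintype V] [DecidableEq V]

set_option linter.unusedSectionVars false
set_option maxHeartbeats 1000000

lemma zmod2_cases (z : ZMod 2) : z = 0 ∨ z = 1 := by revert z; decide

lemma odd_iff_cast (n : ℕ) : Odd n ↔ (n : ZMod 2) = 1 := by
  rw [Nat.odd_iff]
  constructor
  · intro h; rw [← ZMod.natCast_mod, h]; rfl
  · intro h; by_contra hne
    have h0 : n % 2 = 0 := by omega
    rw [← ZMod.natCast_mod, h0] at h
    exact (by decide : ((0:ℕ):ZMod 2) ≠ 1) h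

def adjZ (G : SimpleGraph V) (v w : V) : ZMod 2 := if G.Adj v w then 1 else 0

lemma adjZ_comm (G : SimpleGraph V) (v w : V) : adjZ G v w = adjZ G w v := by
  unfold adjZ; rw [SimpleGraph.adj_comm]

lemma mem_oddNbhd_iff_sum (G : SimpleGraph V) (W : Finset V) (v : V) :
    v ∈ oddNbhd G W ↔ ∑ w ∈ W, adjZ G v w = 1 := by
  unfold oddNbhd
  rw [Finset.mem_filter]
  simp only [Finset.mem_univ, true_and]
  rw [odd_iff_cast, Finset.card_filter]
  push_cast
  unfold adjZ
  norm_num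

/-- vertex set of an F2 vector supported on a Finset -/
def vset (U : Finset V) (x : ↥U → ZMod 2) : Finset V :=
  (U.attach.filter (fun w => x w = 1)).image Subtype.val

lemma vset_subset (U : Finset V) (x : ↥U → ZMod 2) : vset U x ⊆ U := by
  intro v hv
  rw [vset, Finset.mem_image] at hv
  obtain ⟨w, _, rfl⟩ := hv
  exact w.2

lemma mem_vset (U : Finset V) (x : ↥U → ZMod 2) (v : V) :
    v ∈ vset U x ↔ ∃ h : v ∈ U, x ⟨v, h⟩ = 1 := by
  rw [vset, Finset.mem_image]
  constructor
  · rintro ⟨w, hw, rfl⟩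
    rw [Finset.mem_filter] at hw
    exact ⟨w.2, hw.2⟩
  · rintro ⟨h, hx⟩
    exact ⟨⟨v, h⟩, Finset.mem_filter.2 ⟨Finset.mem_attach _ _, hx⟩, rfl⟩

lemma sum_vset (G : SimpleGraph V) (U : Finset V) (x : ↥U → ZMod 2) (v : V) :
    ∑ w ∈ vset U x, adjZ G v w = ∑ w : ↥U, adjZ G v ↑w * x w := by
  have hattach : U.attach = (Finset.univ : Finset ↥U) := by
    ext w; simp
  rw [vset, Finset.sum_image (fun a _ b _ h => Subtype.ext h)]
  rw [Finset.sum_filter]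
  rw [hattach]
  refine Finset.sum_congr rfl fun w _ => ?_
  rcases zmod2_cases (x w) with h | h
  · rw [h, mul_zero, if_neg (by decide)]
  · rw [h, mul_one, if_pos rfl]

lemma vset_nonempty_of_ne_zero (U : Finset V) (x : ↥U → ZMod 2) (hx : x ≠ 0) :
    (vset U x).Nonempty := by
  by_contra hemp
  apply hx
  funext w
  rcases zmod2_cases (x w) with h | h
  · exact h
  · exfalso
    exact hemp ⟨↑w, (mem_vset U x ↑w).2 ⟨w.2, by rw [Subtype.coe_eta]; exact h⟩⟩
lemma phi_lemma {α : Type*} [DecidableEq α] (r : α → α → ZMod 2) :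
    ∀ (E : Finset α), (∀ i ∈ E, ∃ j ∈ E, r i j ≠ 0) → E.Nonempty →
    ∃ Y ⊆ E, Y.Nonempty ∧ ∀ i ∈ Y, ∑ j ∈ Y, r i j = 1 := by
  intro E
  induction E using Finset.strongInduction with
  | _ E ih =>
    intro hr hE
    by_cases hcase : ∃ k ∈ E, ∀ i ∈ E.erase k, ¬ (∀ j ∈ E, r i j = if j = k then 1 else 0)
    · obtain ⟨k, hk, hrow⟩ := hcase
      by_cases hEk : (E.erase k).Nonempty
      · -- recurse on E.erase k
        have hsub : E.erase k ⊂ E := Finset.erase_ssubset hk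
        have hr' : ∀ i ∈ E.erase k, ∃ j ∈ E.erase k, r i j ≠ 0 := by
          intro i hi
          by_contra hall
          push_neg at hall
          apply hrow i hi
          intro j hj
          by_cases hjk : j = k
          · subst hjk
            simp only [if_pos rfl]
            obtain ⟨j', hj', hj'ne⟩ := hr i (Finset.mem_of_mem_erase hi)
            have : j' = j := by
              by_contra hne
              exact hj'ne (hall j' (Finset.mem_erase.2 ⟨hne, hj'⟩))
            rw [this] at hj'ne
            rcases zmod2_cases (r i j) with h | h
            · exact absurd h hj'ne
            · exact h
          · rw [if_neg hjk]
            exact hall j (Finset.mem_erase.2 ⟨hjk, hj⟩)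
        obtain ⟨Y, hYsub, hYne, hYsum⟩ := ih (E.erase k) hsub hr' hEk
        exact ⟨Y, hYsub.trans (Finset.erase_subset k E), hYne, hYsum⟩
      · -- E = {k}
        have hEeq : E = {k} := by
          apply Finset.eq_singleton_iff_unique_mem.2
          refine ⟨hk, fun x hx => ?_⟩
          by_contra hne
          exact hEk ⟨x, Finset.mem_erase.2 ⟨hne, hx⟩⟩
        refine ⟨{k}, by rw [hEeq], ⟨k, Finset.mem_singleton_self k⟩, ?_⟩
        intro i hi
        rw [Finset.mem_singleton] at hi
        rw [hi, Finset.sum_singleton]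
        obtain ⟨j, hj, hjne⟩ := hr k hk
        rw [hEeq, Finset.mem_singleton] at hj
        rw [hj] at hjne
        rcases zmod2_cases (r k k) with h | h
        · exact absurd h hjne
        · exact h
    · -- every k has a singleton row pointing at it
      push_neg at hcase
      -- surjectivity: every i in E has a k with row i = e_k
      have hsig : ∀ i ∈ E, ∃ k ∈ E, ∀ j ∈ E, r i j = if j = k then 1 else 0 := by
        have hinj : ∀ k₁ k₂ (h₁ : k₁ ∈ E) (h₂ : k₂ ∈ E),
            (hcase k₁ h₁).choose = (hcase k₂ h₂).choose → k₁ = k₂ := by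
          intro k₁ k₂ h₁ h₂ heq
          obtain ⟨hi₁, hrow₁⟩ := (hcase k₁ h₁).choose_spec
          obtain ⟨hi₂, hrow₂⟩ := (hcase k₂ h₂).choose_spec
          rw [heq] at hrow₁
          have e1 := hrow₁ k₁ h₁
          have e2 := hrow₂ k₁ h₁
          rw [if_pos rfl] at e1
          rw [e1] at e2
          by_contra hne
          rw [if_neg hne] at e2
          exact (by decide : (1 : ZMod 2) ≠ 0) e2
        have hsurj := Finset.surj_on_of_inj_on_of_card_le
          (fun k (hk : k ∈ E) => (hcase k hk).choose)
          (fun k hk => Finset.mem_of_mem_erase (hcase k hk).choose_spec.1)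
          hinj le_rfl
        intro i hi
        obtain ⟨k, hk, hik⟩ := hsurj i hi
        refine ⟨k, hk, ?_⟩
        have hik' : i = (hcase k hk).choose := hik
        rw [hik']
        exact (hcase k hk).choose_spec.2
      -- build sigma function and orbit
      obtain ⟨i₀, hi₀⟩ := hE
      set σ : α → α := fun i => if h : i ∈ E then (hsig i h).choose else i with hσdef
      have hσE : ∀ i ∈ E, σ i ∈ E := by
        intro i hi
        rw [hσdef]; simp only [dif_pos hi]
        exact (hsig i hi).choose_spec.1
      have hσrow : ∀ i ∈ E, ∀ j ∈ E, r i j = if j = σ i then 1 else 0 := by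
        intro i hi
        rw [hσdef]; simp only [dif_pos hi]
        exact (hsig i hi).choose_spec.2
      set Y : Finset α := E.filter (fun x => ∃ t : ℕ, σ^[t] i₀ = x) with hYdef
      have hYE : Y ⊆ E := Finset.filter_subset _ _
      have hi₀Y : i₀ ∈ Y := by
        rw [hYdef, Finset.mem_filter]
        exact ⟨hi₀, 0, rfl⟩
      have hσY : ∀ i ∈ Y, σ i ∈ Y := by
        intro i hi
        rw [hYdef, Finset.mem_filter] at hi ⊢
        obtain ⟨hiE, t, ht⟩ := hi
        refine ⟨hσE i hiE, t + 1, ?_⟩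
        rw [Function.iterate_succ_apply', ht]
      refine ⟨Y, hYE, ⟨i₀, hi₀Y⟩, ?_⟩
      intro i hi
      have hiE := hYE hi
      have : ∑ j ∈ Y, r i j = ∑ j ∈ Y, if j = σ i then 1 else 0 := by
        refine Finset.sum_congr rfl fun j hj => hσrow i hiE j (hYE hj)
      rw [this, Finset.sum_ite_eq' Y (σ i) (fun _ => (1 : ZMod 2))]
      rw [if_pos (hσY i hi)]

lemma parity_pairing (G : SimpleGraph V) (S W : Finset V) :
    ((S.filter (fun s => s ∈ oddNbhd G W)).card : ZMod 2)
      = ((W.filter (fun w => w ∈ oddNbhd G S)).card : ZMod 2) := by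
  have key : ∀ (A B : Finset V),
      ((A.filter (fun a => a ∈ oddNbhd G B)).card : ZMod 2) = ∑ a ∈ A, ∑ b ∈ B, adjZ G a b := by
    intro A B
    rw [Finset.card_filter]
    push_cast
    refine Finset.sum_congr rfl fun a _ => ?_
    rcases zmod2_cases (∑ b ∈ B, adjZ G a b) with h | h
    · rw [h]
      have hmem : a ∉ oddNbhd G B := by
        rw [mem_oddNbhd_iff_sum, h]
        exact fun hh => absurd hh (by decide)
      simp [hmem]
    · rw [h]
      have hmem : a ∈ oddNbhd G B := by rw [mem_oddNbhd_iff_sum, h]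
      simp [hmem]
  rw [key, key, Finset.sum_comm]
  refine Finset.sum_congr rfl fun w _ => Finset.sum_congr rfl fun s _ => adjZ_comm G s w

instance : Fact (Nat.Prime 2) := ⟨Nat.prime_two⟩

lemma exists_peel (G : SimpleGraph V) (R I O : Finset V) (hIR : I ⊆ R) (hOR : O ⊆ R)
    (hcard : I.card = O.card)
    (hni : ∀ W : Finset V, W ⊆ R \ O → (∀ v ∈ oddNbhd G W, v ∈ R → v ∈ W ∪ I) → W = ∅)
    (hU : (R \ O).Nonempty) :
    ∃ u ∈ R \ O, ∃ S ⊆ O \ I, u ∈ oddNbhd G S ∧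
      (∀ v ∈ oddNbhd G S, v ∈ R \ O → v = u) := by
  classical
  set U : Finset V := R \ O with hUdef
  set J : Finset V := I \ O with hJdef
  set P : Finset V := O \ I with hPdef
  set E : Finset V := U \ J with hEdef
  have hJU : J ⊆ U := by
    intro v hv
    rw [hJdef, Finset.mem_sdiff] at hv
    rw [hUdef, Finset.mem_sdiff]
    exact ⟨hIR hv.1, hv.2⟩
  have hEU : E ⊆ U := Finset.sdiff_subset
  have hPJ : P.card = J.card := by
    rw [hPdef, hJdef]
    have h1 := Finset.card_inter_add_card_sdiff O I
    have h2 := Finset.card_inter_add_card_sdiff I O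
    rw [Finset.inter_comm] at h2
    omega
  set N : (↥U → ZMod 2) →ₗ[ZMod 2] (↥P → ZMod 2) :=
    Matrix.mulVecLin (Matrix.of fun (p : ↥P) (w : ↥U) => adjZ G ↑p ↑w) with hNdef
  have hNapply : ∀ (x : ↥U → ZMod 2) (p : ↥P), N x p = ∑ w : ↥U, adjZ G ↑p ↑w * x w := by
    intro x p
    rw [hNdef]
    simp [Matrix.mulVecLin_apply, Matrix.mulVec, dotProduct]
  set K := LinearMap.ker N with hKdef
  by_cases hcov : ∀ u : ↥U, ∃ x ∈ K, x u = 1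
  · exfalso
    have hinternal : ∀ x : ↥U → ZMod 2, x ∈ K → x ≠ 0 →
        (∀ i : ↥E, (∑ w : ↥U, adjZ G ↑i ↑w * x w) = 1 → ∃ h : (↑i : V) ∈ U, x ⟨↑i, h⟩ = 1) →
        False := by
      intro x hxK hx0 hE1
      have hW : vset U x = ∅ := by
        apply hni (vset U x) (vset_subset U x)
        intro v hvodd hvR
        rw [mem_oddNbhd_iff_sum, sum_vset] at hvodd
        by_contra hvnot
        rw [Finset.mem_union] at hvnot
        push_neg at hvnot
        obtain ⟨hvW, hvI⟩ := hvnot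
        by_cases hvO : v ∈ O
        · have hvP : v ∈ P := by rw [hPdef, Finset.mem_sdiff]; exact ⟨hvO, hvI⟩
          have hz := hNapply x ⟨v, hvP⟩
          rw [LinearMap.mem_ker] at hxK
          rw [hxK] at hz
          simp only [Pi.zero_apply] at hz
          rw [← hz] at hvodd
          exact (by decide : (0 : ZMod 2) ≠ 1) hvodd
        · have hvU : v ∈ U := by rw [hUdef, Finset.mem_sdiff]; exact ⟨hvR, hvO⟩
          by_cases hvJ : v ∈ J
          · exact hvI (by rw [hJdef, Finset.mem_sdiff] at hvJ; exact hvJ.1)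
          · have hvE : v ∈ E := by rw [hEdef, Finset.mem_sdiff]; exact ⟨hvU, hvJ⟩
            obtain ⟨h, hx1⟩ := hE1 ⟨v, hvE⟩ hvodd
            exact hvW ((mem_vset U x v).2 ⟨h, hx1⟩)
      exact (vset_nonempty_of_ne_zero U x hx0).ne_empty hW
    set Θ : (↥U → ZMod 2) →ₗ[ZMod 2] (↥E → ZMod 2) :=
      Matrix.mulVecLin (Matrix.of fun (e : ↥E) (w : ↥U) => adjZ G ↑e ↑w) with hΘdef
    have hΘapply : ∀ (x : ↥U → ZMod 2) (e : ↥E), Θ x e = ∑ w : ↥U, adjZ G ↑e ↑w * x w := by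
      intro x e
      rw [hΘdef]
      simp [Matrix.mulVecLin_apply, Matrix.mulVec, dotProduct]
    set θK : ↥K →ₗ[ZMod 2] (↥E → ZMod 2) := Θ.comp K.subtype with hθKdef
    by_cases hinj : Function.Injective θK
    · -- bijective branch
      have hfU : Module.finrank (ZMod 2) (↥U → ZMod 2) = U.card := by
        rw [Module.finrank_pi]; exact Fintype.card_coe U
      have hfP : Module.finrank (ZMod 2) (↥P → ZMod 2) = P.card := by
        rw [Module.finrank_pi]; exact Fintype.card_coe P
      have hfE : Module.finrank (ZMod 2) (↥E → ZMod 2) = E.card := by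
        rw [Module.finrank_pi]; exact Fintype.card_coe E
      have hrn := LinearMap.finrank_range_add_finrank_ker N
      rw [hfU, ← hKdef] at hrn
      have hrle : Module.finrank (ZMod 2) ↥(LinearMap.range N) ≤ P.card := by
        calc Module.finrank (ZMod 2) ↥(LinearMap.range N)
            ≤ Module.finrank (ZMod 2) (↥P → ZMod 2) := Submodule.finrank_le _
          _ = P.card := hfP
      have hKle : Module.finrank (ZMod 2) ↥K ≤ E.card := by
        rw [← LinearMap.finrank_range_of_inj hinj]
        calc Module.finrank (ZMod 2) ↥(LinearMap.range θK)
            ≤ Module.finrank (ZMod 2) (↥E → ZMod 2) := Submodule.finrank_le _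
          _ = E.card := hfE
      have hEcard : E.card = U.card - J.card := Finset.card_sdiff_of_subset hJU
      have hJle : J.card ≤ U.card := Finset.card_le_card hJU
      have hKE : Module.finrank (ZMod 2) ↥K
          = Module.finrank (ZMod 2) (↥E → ZMod 2) := by
        rw [hfE]; omega
      have hEne : E.Nonempty := by
        rcases Finset.eq_empty_or_nonempty E with hEe | h
        · exfalso
          have hz : Module.finrank (ZMod 2) ↥K = 0 := by
            rw [hKE, hfE, hEe]; simp
          have hKbot : K = ⊥ := Submodule.finrank_eq_zero.1 hz
          obtain ⟨u0, hu0⟩ := hU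
          obtain ⟨x, hxK, hx1⟩ := hcov ⟨u0, hu0⟩
          rw [hKbot, Submodule.mem_bot] at hxK
          rw [hxK] at hx1
          exact (by decide : (0 : ZMod 2) ≠ 1) hx1
        · exact h
      have hsurj := (LinearMap.injective_iff_surjective_of_finrank_eq_finrank hKE).1 hinj
      set ebij := LinearEquiv.ofBijective θK ⟨hinj, hsurj⟩ with hebij
      set ρK : ↥K →ₗ[ZMod 2] (↥E → ZMod 2) :=
        (LinearMap.funLeft (ZMod 2) (ZMod 2) (fun e : ↥E => (⟨↑e, hEU e.2⟩ : ↥U))).comp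
          K.subtype with hρKdef
      have hρKapply : ∀ (xK : ↥K) (i : ↥E), ρK xK i = (↑xK : ↥U → ZMod 2) ⟨↑i, hEU i.2⟩ := by
        intro xK i; rfl
      set Φm := ρK.comp ebij.symm.toLinearMap with hΦmdef
      have hΦρ : ∀ xK : ↥K, Φm (ebij xK) = ρK xK := by
        intro xK
        show ρK (ebij.symm (ebij xK)) = ρK xK
        rw [LinearEquiv.symm_apply_apply]
      set r : ↥E → ↥E → ZMod 2 := fun i j => Φm (Pi.single j (1 : ZMod 2)) i with hrdef
      have hdecomp : ∀ (y : ↥E → ZMod 2) (i : ↥E), Φm y i = ∑ j : ↥E, y j * r i j := by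
        intro y i
        conv_lhs => rw [← Finset.univ_sum_single y]
        rw [map_sum, Finset.sum_apply]
        refine Finset.sum_congr rfl fun j _ => ?_
        have hsm : Pi.single j (y j) = y j • (Pi.single j (1 : ZMod 2) : ↥E → ZMod 2) := by
          rw [← Pi.single_smul, smul_eq_mul, mul_one]
        rw [hsm, map_smul]
        simp [smul_eq_mul, hrdef]
      have hrows : ∀ i ∈ (Finset.univ : Finset ↥E), ∃ j ∈ Finset.univ, r i j ≠ 0 := by
        intro i _
        obtain ⟨x, hxK, hx1⟩ := hcov ⟨↑i, hEU i.2⟩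
        by_contra hall
        push_neg at hall
        have h1 : Φm (ebij ⟨x, hxK⟩) i = 1 := by
          rw [hΦρ, hρKapply]
          exact hx1
        rw [hdecomp] at h1
        have hz : (∑ j : ↥E, ebij ⟨x, hxK⟩ j * r i j) = 0 :=
          Finset.sum_eq_zero fun j hj => by rw [hall j hj, mul_zero]
        rw [hz] at h1
        exact (by decide : (0 : ZMod 2) ≠ 1) h1
      have hEne' : (Finset.univ : Finset ↥E).Nonempty := by
        obtain ⟨e, he⟩ := hEne
        exact ⟨⟨e, he⟩, Finset.mem_univ _⟩
      obtain ⟨Y, _, hYne, hYsum⟩ := phi_lemma r Finset.univ hrows hEne'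
      set yv : ↥E → ZMod 2 := fun j => if j ∈ Y then 1 else 0 with hyvdef
      have hΦyv : ∀ i : ↥E, Φm yv i = ∑ j ∈ Y, r i j := by
        intro i
        rw [hdecomp]
        have h1 : ∑ j ∈ Y, yv j * r i j = ∑ j : ↥E, yv j * r i j := by
          apply Finset.sum_subset (Finset.subset_univ Y)
          intro j _ hj
          have : yv j = 0 := by simp only [hyvdef]; rw [if_neg hj]
          rw [this, zero_mul]
        rw [← h1]
        refine Finset.sum_congr rfl fun j hj => ?_
        have : yv j = 1 := by simp only [hyvdef]; rw [if_pos hj]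
        rw [this, one_mul]
      set xK := ebij.symm yv with hxKdef
      have hρx : ∀ i : ↥E, ρK xK i = Φm yv i := by
        intro i; rfl
      have hθx : Θ ↑xK = yv := by
        have h1 : ebij xK = yv := by rw [hxKdef, LinearEquiv.apply_symm_apply]
        have h2 : ebij xK = θK xK := rfl
        rw [h2] at h1
        exact h1
      have hx0 : (↑xK : ↥U → ZMod 2) ≠ 0 := by
        obtain ⟨i₁, hi₁⟩ := hYne
        intro hzero
        have := hρx i₁
        rw [hρKapply] at this
        rw [hzero] at this
        simp only [Pi.zero_apply] at this
        rw [hΦyv i₁, hYsum i₁ hi₁] at this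
        exact (by decide : (0 : ZMod 2) ≠ 1) this
      apply hinternal ↑xK xK.2 hx0
      intro i hi
      have hΘi : (∑ w : ↥U, adjZ G ↑i ↑w * (↑xK : ↥U → ZMod 2) w) = yv i := by
        rw [← hΘapply, hθx]
      rw [hΘi] at hi
      have hiY : i ∈ Y := by
        simp only [hyvdef] at hi
        by_contra hno
        rw [if_neg hno] at hi
        exact (by decide : (0 : ZMod 2) ≠ 1) hi
      refine ⟨hEU i.2, ?_⟩
      have hval := hYsum i hiY
      rw [← hΦyv i, ← hρx i, hρKapply] at hval
      exact hval
    · -- non-injective branch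
      rw [← LinearMap.ker_eq_bot] at hinj
      obtain ⟨xK, hxKmem, hxK0⟩ := (Submodule.ne_bot_iff _).1 hinj
      have hx0 : (↑xK : ↥U → ZMod 2) ≠ 0 := by
        intro h
        exact hxK0 (Subtype.ext h)
      have hθ0 : Θ ↑xK = 0 := hxKmem
      apply hinternal ↑xK xK.2 hx0
      intro i hi
      exfalso
      have : (∑ w : ↥U, adjZ G ↑i ↑w * (↑xK : ↥U → ZMod 2) w) = 0 := by
        rw [← hΘapply, hθ0]
        rfl
      rw [this] at hi
      exact (by decide : (0 : ZMod 2) ≠ 1) hi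
  · -- duality branch
    push_neg at hcov
    obtain ⟨u, hu⟩ := hcov
    have hu0 : ∀ x ∈ K, x u = 0 := fun x hx => (zmod2_cases (x u)).resolve_right (hu x hx)
    set f : ↥P → ((↥U → ZMod 2) →ₗ[ZMod 2] ZMod 2) :=
      fun p => (LinearMap.proj p).comp N with hfdef
    have hker : (⨅ p : ↥P, LinearMap.ker (f p)) ≤
        LinearMap.ker (LinearMap.proj u : (↥U → ZMod 2) →ₗ[ZMod 2] ZMod 2) := by
      intro x hx
      rw [Submodule.mem_iInf] at hx
      have hxK : x ∈ K := by
        rw [hKdef, LinearMap.mem_ker]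
        funext p
        have hp := hx p
        rw [LinearMap.mem_ker] at hp
        exact hp
      rw [LinearMap.mem_ker, LinearMap.proj_apply]
      exact hu0 x hxK
    have hspan := mem_span_of_iInf_ker_le_ker hker
    rw [Submodule.mem_span_range_iff_exists_fun] at hspan
    obtain ⟨c, hc⟩ := hspan
    have hkey : ∀ w : ↥U, (∑ p : ↥P, c p * adjZ G ↑p ↑w) = if u = w then 1 else 0 := by
      intro w
      have happ := congrArg
        (fun (φ : (↥U → ZMod 2) →ₗ[ZMod 2] ZMod 2) => φ (Pi.single w (1 : ZMod 2))) hc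
      simp only [LinearMap.sum_apply, LinearMap.smul_apply, LinearMap.proj_apply] at happ
      have hNp : ∀ p : ↥P, f p (Pi.single w (1 : ZMod 2)) = adjZ G ↑p ↑w := by
        intro p
        have h0 : f p (Pi.single w (1 : ZMod 2)) = N (Pi.single w (1 : ZMod 2)) p := rfl
        rw [h0, hNapply]
        have hterm : ∀ w' : ↥U,
            adjZ G ↑p ↑w' * (Pi.single w (1 : ZMod 2) : ↥U → ZMod 2) w' =
              if w' = w then adjZ G ↑p ↑w' else 0 := by
          intro w'
          rw [Pi.single_apply]
          by_cases hw : w' = w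
          · rw [if_pos hw, if_pos hw, mul_one]
          · rw [if_neg hw, if_neg hw, mul_zero]
        simp_rw [hterm]
        rw [Finset.sum_ite_eq' Finset.univ w (fun w' => adjZ G ↑p ↑w')]
        rw [if_pos (Finset.mem_univ w)]
      simp_rw [hNp] at happ
      simp only [smul_eq_mul] at happ
      rw [happ, Pi.single_apply]
    set S := vset P c with hSdef
    have hSsub : S ⊆ O \ I := vset_subset P c
    have hodd : ∀ v : V, v ∈ U → (v ∈ oddNbhd G S ↔ v = ↑u) := by
      intro v hv
      rw [mem_oddNbhd_iff_sum, hSdef, sum_vset]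
      have hk : (∑ p : ↥P, c p * adjZ G ↑p v) = if u = ⟨v, hv⟩ then 1 else 0 :=
        hkey ⟨v, hv⟩
      have hcomm : (∑ p : ↥P, adjZ G v ↑p * c p)
          = ∑ p : ↥P, c p * adjZ G ↑p v := by
        refine Finset.sum_congr rfl fun p _ => ?_
        rw [mul_comm, adjZ_comm]
      rw [hcomm, hk]
      constructor
      · intro h1
        by_contra hne
        have hne' : u ≠ (⟨v, hv⟩ : ↥U) := by
          intro hh
          apply hne
          rw [hh]
        rw [if_neg hne'] at h1
        exact (by decide : (0 : ZMod 2) ≠ 1) h1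
      · intro h
        have : u = (⟨v, hv⟩ : ↥U) := by
          apply Subtype.ext
          exact h.symm
        rw [if_pos this]
    refine ⟨↑u, u.2, S, hSsub, ?_, ?_⟩
    · exact (hodd ↑u u.2).2 rfl
    · intro v hvodd hvRO
      exact (hodd v hvRO).1 hvodd

lemma aux_gflow (G : SimpleGraph V) : ∀ (n : ℕ) (R I O : Finset V), (R \ O).card = n →
    I ⊆ R → O ⊆ R → I.card = O.card →
    (∀ W : Finset V, W ⊆ R \ O → (∀ v ∈ oddNbhd G W, v ∈ R → v ∈ W ∪ I) → W = ∅) →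
    ∃ (ρ : V → ℕ) (g : V → Finset V),
      (∀ v, v ∉ R \ O → ρ v = 0) ∧
      ∀ x ∈ R \ O, 0 < ρ x ∧ g x ⊆ R \ I ∧ (∀ v ∈ g x, ρ v < ρ x) ∧
        x ∈ oddNbhd G (g x) ∧
        (∀ v ∈ oddNbhd G (g x), v ∈ R → v ≠ x → ρ v < ρ x) := by
  intro n
  induction n with
  | zero =>
    intro R I O hn _ _ _ _
    refine ⟨fun _ => 0, fun _ => ∅, fun _ _ => rfl, ?_⟩
    intro x hx
    rw [Finset.card_eq_zero] at hn
    rw [hn] at hx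
    exact absurd hx (Finset.notMem_empty x)
  | succ n ih =>
    intro R I O hn hIR hOR hcard hni
    have hU : (R \ O).Nonempty := by
      rw [← Finset.card_pos, hn]; omega
    obtain ⟨u, huRO, S, hSsub, huS, hfoc⟩ := exists_peel G R I O hIR hOR hcard hni hU
    have hSne : S.Nonempty := by
      rcases Finset.eq_empty_or_nonempty S with hSe | hSn
      · exfalso
        rw [hSe, mem_oddNbhd_iff_sum, Finset.sum_empty] at huS
        exact (by decide : (0 : ZMod 2) ≠ 1) huS
      · exact hSn
    obtain ⟨s₀, hs₀S⟩ := hSne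
    have hs₀OI := hSsub hs₀S
    rw [Finset.mem_sdiff] at hs₀OI
    obtain ⟨hs₀O, hs₀I⟩ := hs₀OI
    have huRO' := huRO
    rw [Finset.mem_sdiff] at huRO'
    obtain ⟨huR, huO⟩ := huRO'
    have hus₀ : u ≠ s₀ := fun h => huO (h ▸ hs₀O)
    have hRO' : (R.erase s₀) \ (insert u (O.erase s₀)) = (R \ O).erase u := by
      ext v
      simp only [Finset.mem_sdiff, Finset.mem_erase, Finset.mem_insert, not_or]
      constructor
      · rintro ⟨⟨hvs, hvR⟩, hvu, hnot⟩
        exact ⟨hvu, hvR, fun hvO => hnot ⟨hvs, hvO⟩⟩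
      · rintro ⟨hvu, hvR, hvO⟩
        have hvs : v ≠ s₀ := fun hh => hvO (hh ▸ hs₀O)
        exact ⟨⟨hvs, hvR⟩, hvu, fun hh => hvO hh.2⟩
    have hI'R' : I ⊆ R.erase s₀ := fun v hv =>
      Finset.mem_erase.2 ⟨fun hh => hs₀I (hh ▸ hv), hIR hv⟩
    have hO'R' : insert u (O.erase s₀) ⊆ R.erase s₀ := by
      intro v hv
      rcases Finset.mem_insert.1 hv with hh | hh
      · subst hh; exact Finset.mem_erase.2 ⟨hus₀, huR⟩
      · rw [Finset.mem_erase] at hh ⊢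
        exact ⟨hh.1, hOR hh.2⟩
    have hcard' : I.card = (insert u (O.erase s₀)).card := by
      rw [Finset.card_insert_of_notMem (fun hh => huO (Finset.mem_of_mem_erase hh))]
      rw [Finset.card_erase_of_mem hs₀O]
      have hOpos : 0 < O.card := Finset.card_pos.2 ⟨s₀, hs₀O⟩
      omega
    have hn' : ((R.erase s₀) \ (insert u (O.erase s₀))).card = n := by
      rw [hRO', Finset.card_erase_of_mem huRO, hn]
      omega
    have hni' : ∀ W : Finset V, W ⊆ (R.erase s₀) \ (insert u (O.erase s₀)) →
        (∀ v ∈ oddNbhd G W, v ∈ R.erase s₀ → v ∈ W ∪ I) → W = ∅ := by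
      intro W hWsub hWodd
      rw [hRO'] at hWsub
      have hWRO : W ⊆ R \ O := hWsub.trans (Finset.erase_subset _ _)
      have hs₀notodd : s₀ ∉ oddNbhd G W := by
        have hpar := parity_pairing G S W
        have hWOdd : W.filter (fun w => w ∈ oddNbhd G S) = ∅ := by
          rw [Finset.filter_eq_empty_iff]
          intro w hw hwodd
          have hwne := (Finset.mem_erase.1 (hWsub hw)).1
          exact hwne (hfoc w hwodd (hWRO hw))
        rw [hWOdd] at hpar
        simp only [Finset.card_empty, Nat.cast_zero] at hpar
        have hsub : S.filter (fun s => s ∈ oddNbhd G W) ⊆ {s₀} := by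
          intro s hs
          rw [Finset.mem_filter] at hs
          obtain ⟨hsS, hsodd⟩ := hs
          have hsOI := hSsub hsS
          rw [Finset.mem_sdiff] at hsOI
          rw [Finset.mem_singleton]
          by_contra hne
          have hsR' : s ∈ R.erase s₀ := Finset.mem_erase.2 ⟨hne, hOR hsOI.1⟩
          have hmem := hWodd s hsodd hsR'
          rw [Finset.mem_union] at hmem
          rcases hmem with hh | hh
          · exact (Finset.mem_sdiff.1 (hWRO hh)).2 hsOI.1
          · exact hsOI.2 hh
        intro hs₀odd
        have hmem : s₀ ∈ S.filter (fun s => s ∈ oddNbhd G W) :=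
          Finset.mem_filter.2 ⟨hs₀S, hs₀odd⟩
        have heq : S.filter (fun s => s ∈ oddNbhd G W) = {s₀} :=
          Finset.Subset.antisymm hsub (Finset.singleton_subset_iff.2 hmem)
        rw [heq] at hpar
        simp only [Finset.card_singleton, Nat.cast_one] at hpar
        exact (by decide : (1 : ZMod 2) ≠ 0) hpar
      apply hni W hWRO
      intro v hvodd hvR
      have hvne : v ≠ s₀ := fun hh => hs₀notodd (hh ▸ hvodd)
      exact hWodd v hvodd (Finset.mem_erase.2 ⟨hvne, hvR⟩)
    obtain ⟨ρ', g', hρ'0, hspec⟩ :=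
      ih (R.erase s₀) I (insert u (O.erase s₀)) hn' hI'R' hO'R' hcard' hni'
    obtain ⟨ρ, hρu, hρmem, hρout⟩ :
        ∃ ρ : V → ℕ, ρ u = 1 ∧ (∀ v, v ∈ R \ O → v ≠ u → ρ v = ρ' v + 1) ∧
          (∀ v, v ∉ R \ O → ρ v = 0) := by
      refine ⟨fun v => if v ∈ R \ O then (if v = u then 1 else ρ' v + 1) else 0, ?_, ?_, ?_⟩
      · show (if u ∈ R \ O then (if u = u then 1 else ρ' u + 1) else 0) = 1
        rw [if_pos huRO, if_pos rfl]
      · intro v hv hvu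
        show (if v ∈ R \ O then (if v = u then 1 else ρ' v + 1) else 0) = ρ' v + 1
        rw [if_pos hv, if_neg hvu]
      · intro v hv
        show (if v ∈ R \ O then (if v = u then 1 else ρ' v + 1) else 0) = 0
        rw [if_neg hv]
    obtain ⟨g, hgu, hgx⟩ :
        ∃ g : V → Finset V, g u = S ∧ (∀ x, x ≠ u → g x = g' x) := by
      refine ⟨fun x => if x = u then S else g' x, ?_, ?_⟩
      · show (if u = u then S else g' u) = S
        rw [if_pos rfl]
      · intro x hx
        show (if x = u then S else g' x) = g' x
        rw [if_neg hx]
    have hρlow : ∀ v, v ∈ R \ O → v ≠ u → v ∈ (R.erase s₀) \ (insert u (O.erase s₀)) := by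
      intro v hv hvu
      rw [hRO']
      exact Finset.mem_erase.2 ⟨hvu, hv⟩
    refine ⟨ρ, g, hρout, ?_⟩
    intro x hx
    by_cases hxu : x = u
    · subst hxu
      rw [hgu, hρu]
      refine ⟨by omega, ?_, ?_, huS, ?_⟩
      · intro v hv
        have hvOI := hSsub hv
        rw [Finset.mem_sdiff] at hvOI ⊢
        exact ⟨hOR hvOI.1, hvOI.2⟩
      · intro v hv
        have hvOI := hSsub hv
        rw [Finset.mem_sdiff] at hvOI
        have hvnRO : v ∉ R \ O := fun hh => (Finset.mem_sdiff.1 hh).2 hvOI.1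
        rw [hρout v hvnRO]
        omega
      · intro v hvodd hvR hvne
        by_cases hvRO : v ∈ R \ O
        · exact absurd (hfoc v hvodd hvRO) hvne
        · rw [hρout v hvRO]; omega
    · have hx' := hρlow x hx hxu
      obtain ⟨hρpos, hgsub, hglt, hxodd, hoddlt⟩ := hspec x hx'
      rw [hgx x hxu, hρmem x hx hxu]
      refine ⟨by omega, ?_, ?_, hxodd, ?_⟩
      · intro v hv
        have hvR'I := hgsub hv
        rw [Finset.mem_sdiff] at hvR'I ⊢
        exact ⟨Finset.mem_of_mem_erase hvR'I.1, hvR'I.2⟩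
      · intro v hv
        have hlt := hglt v hv
        by_cases hvRO : v ∈ R \ O
        · by_cases hvu : v = u
          · rw [hvu, hρu]; omega
          · rw [hρmem v hvRO hvu]; omega
        · rw [hρout v hvRO]; omega
      · intro v hvodd hvR hvne
        by_cases hvRO : v ∈ R \ O
        · by_cases hvu : v = u
          · rw [hvu, hρu]; omega
          · rw [hρmem v hvRO hvu]
            have hvs₀ : v ≠ s₀ := fun hh => (Finset.mem_sdiff.1 hvRO).2 (hh ▸ hs₀O)
            have := hoddlt v hvodd (Finset.mem_erase.2 ⟨hvs₀, hvR⟩) hvne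
            omega
        · rw [hρout v hvRO]; omega

theorem hasGflow_of_no_internal_set (G : SimpleGraph V) (I O : Finset V)
    (hcard : I.card = O.card)
    (h : ∀ W ⊆ Oᶜ, oddNbhd G W ⊆ W ∪ I → W = ∅) :
    HasGflow G I O := by
  classical
  have hni : ∀ W : Finset V, W ⊆ Finset.univ \ O →
      (∀ v ∈ oddNbhd G W, v ∈ Finset.univ → v ∈ W ∪ I) → W = ∅ := by
    intro W hWsub hWodd
    apply h W
    · intro v hv
      rw [Finset.mem_compl]
      exact (Finset.mem_sdiff.1 (hWsub hv)).2
    · intro v hv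
      exact hWodd v hv (Finset.mem_univ v)
  obtain ⟨ρ, g, hρ0, hspec⟩ := aux_gflow G ((Finset.univ \ O).card) Finset.univ I O rfl
    (Finset.subset_univ I) (Finset.subset_univ O) hcard hni
  haveI hirr : IsIrrefl V (fun a b => ρ b < ρ a) := ⟨fun a => lt_irrefl (ρ a)⟩
  haveI htr : IsTrans V (fun a b => ρ b < ρ a) := ⟨fun a b c h1 h2 => lt_trans h2 h1⟩
  have hSO : IsStrictOrder V (fun a b => ρ b < ρ a) := { }
  refine ⟨g, fun a b => ρ b < ρ a, hSO, ?_⟩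
  · intro u huO
    have huRO : u ∈ Finset.univ \ O := Finset.mem_sdiff.2 ⟨Finset.mem_univ u, huO⟩
    obtain ⟨hpos, hsub, hglt, hodd, hoddlt⟩ := hspec u huRO
    refine ⟨?_, hglt, hodd, ?_⟩
    · intro v hv
      rw [Finset.mem_compl]
      exact (Finset.mem_sdiff.1 (hsub hv)).2
    · intro v hv hvne
      exact hoddlt v hv (Finset.mem_univ v) hvne
end
end

section
/- If an open graph (G, I, O) has a gflow, then it has no nonempty internal set: every W ⊆ Oᶜ with Odd(W) ⊆ W ∪ I is empty. -/
open scoped Classical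
noncomputable section

variable {V : Type*} [Fintype V] [DecidableEq V]

/-!
Let `W` be a nonempty internal set and `u` a `≺`-maximal element of `W`. Counting the edges between
`g u` and `W` modulo 2 in two ways, `|Odd(g u) ∩ W| ≡ |Odd(W) ∩ g u|`. By maximality of `u` the
left side is `{u}`, while every `a ∈ Odd(W) ∩ g u` would lie in `W ∖ I` with `u ≺ a`, so the right
side is empty: `1 ≡ 0`.
-/

open Finset

theorem Finset.exists_forall_not_rel {α : Type*} (r : α → α → Prop) [IsStrictOrder α r]
    {s : Finset α} (hs : s.Nonempty) : ∃ u ∈ s, ∀ w ∈ s, ¬ r u w := by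
  let := partialOrderOfSO r
  obtain ⟨u, hu⟩ := s.exists_maximal hs
  exact ⟨u, hu.prop, fun w hw huw => hu.not_gt hw huw⟩

theorem Finset.natCast_sum_zmod_two {ι : Type*} (s : Finset ι) (f : ι → ℕ) :
    ((∑ i ∈ s, f i : ℕ) : ZMod 2) = #{i ∈ s | Odd (f i)} := by
  rw [Nat.cast_sum, natCast_card_filter]
  refine sum_congr rfl fun i _ => ?_
  split_ifs with h
  · exact ZMod.natCast_eq_one_iff_odd.mpr h
  · exact ZMod.natCast_eq_zero_iff_even.mpr (Nat.not_odd_iff_even.mp h)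

theorem card_oddNbhd_inter_zmod_two (G : SimpleGraph V) (A B : Finset V) :
    (#(oddNbhd G A ∩ B) : ZMod 2) = #(oddNbhd G B ∩ A) := by
  have edges : ∑ b ∈ B, #{a ∈ A | G.Adj b a} = ∑ a ∈ A, #{b ∈ B | G.Adj a b} := by
    simp only [card_filter]
    rw [sum_comm]
    simp only [G.adj_comm]
  have card_eq (X Y : Finset V) :
      #(oddNbhd G X ∩ Y) = #{y ∈ Y | Odd #{x ∈ X | G.Adj y x}} := by
    congr 1
    ext
    simp [oddNbhd, and_comm]
  rw [card_eq, card_eq, ← natCast_sum_zmod_two, ← natCast_sum_zmod_two, edges]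

namespace IsGflow

variable {G : SimpleGraph V} {I O : Finset V} {g : V → Finset V} {r : V → V → Prop}
  {W : Finset V} {u : V}

theorem oddNbhd_inter_eq_singleton (hg : IsGflow G I O g r) (huO : u ∉ O) (huW : u ∈ W)
    (hmax : ∀ w ∈ W, ¬ r u w) : oddNbhd G (g u) ∩ W = {u} := by
  obtain ⟨-, -, hu_odd, hodd_rel⟩ := hg.2 u huO
  ext w
  simp only [mem_inter, mem_singleton]
  constructor
  · rintro ⟨hw_odd, hwW⟩
    by_contra hwu
    exact hmax w hwW (hodd_rel w hw_odd hwu)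
  · rintro rfl
    exact ⟨hu_odd, huW⟩

theorem oddNbhd_inter_eq_empty (hg : IsGflow G I O g r) (huO : u ∉ O)
    (hmax : ∀ w ∈ W, ¬ r u w) (hW : oddNbhd G W ⊆ W ∪ I) : oddNbhd G W ∩ g u = ∅ := by
  obtain ⟨hgI, hg_rel, -, -⟩ := hg.2 u huO
  refine eq_empty_of_forall_notMem fun a ha => ?_
  obtain ⟨ha_odd, ha_g⟩ := mem_inter.mp ha
  have haI : a ∉ I := by simpa using hgI ha_g
  have haW : a ∈ W := (mem_union.mp (hW ha_odd)).resolve_right haI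
  exact hmax a haW (hg_rel a ha_g)

end IsGflow

theorem no_internal_set_of_hasGflow (G : SimpleGraph V) (I O : Finset V)
    (h : HasGflow G I O) :
    ∀ W ⊆ Oᶜ, oddNbhd G W ⊆ W ∪ I → W = ∅ := by
  obtain ⟨g, r, hg⟩ := h
  intro W hWO hW
  by_contra hne
  have := hg.1
  obtain ⟨u, huW, hmax⟩ := exists_forall_not_rel r (nonempty_iff_ne_empty.mpr hne)
  have huO : u ∉ O := by simpa using hWO huW
  have parity := card_oddNbhd_inter_zmod_two G (g u) W
  rw [hg.oddNbhd_inter_eq_singleton huO huW hmax, hg.oddNbhd_inter_eq_empty huO hmax hW] at parity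
  simp at parity
end
end
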